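/- Let D ≥ 1, N ≥ 1, n ≥ D + 1, and let T : (Fin n → Fin N × (Fin D × Fin D)) → ℝ satisfy: (a) within-pair symmetry: T is unchanged when the two Fin D entries of any single slot are swapped (keeping that slot's Fin N label fixed); (b) slot-exchange symmetry: T is unchanged under precomposition with any permutation of the n slots; (c) the cyclic identity: for any two distinct slots k ≠ l with internal labels i, j ∈ Fin N, any fixed assignment of the remaining slots, and any a, b, c, d ∈ Fin D, (T with slots k, l set to (i,(a,b)), (j,(c,d))) + (T with slots k, l set to (i,(a,c)), (j,(d,b))) + (T with slots k, l set to (i,(a,d)), (j,(b,c))) = 0. Then T is identically zero. -/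

import Mathlib

/-!
Since `2n > 2D`, some space-time index `x` occurs at least three times among the `2n` indices of
a configuration `P`. If one slot is `(x, x)` and another slot contains `x`, the cyclic identity,
with its middle term identified by the two symmetries, gives `2 f(i, j) + f(j, i) = 0` for the
values `f(i, j)` at internal labels `i, j` of the two slots; hence `3 f = 0`. If three distinct
slots contain `x`, the cyclic identity on two of them has middle term of the first kind and
outer terms equal to `T P`, so `2 T P = 0`.
-/

open Function Finset

section Symmetries

variable {ι κ δ M : Type*} [DecidableEq ι]

def PairSymmetric (T : (ι → κ × δ × δ) → M) : Prop :=
  ∀ (P : ι → κ × δ × δ) (k : ι), T (update P k ((P k).1, (P k).2.2, (P k).2.1)) = T P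

def SlotSymmetric (T : (ι → κ × δ × δ) → M) : Prop :=
  ∀ (P : ι → κ × δ × δ) (σ : Equiv.Perm ι), T (P ∘ σ) = T P

variable {T : (ι → κ × δ × δ) → M}

theorem PairSymmetric.apply_update_swap (hp : PairSymmetric T) (P : ι → κ × δ × δ) (k : ι)
    (i : κ) (a b : δ) : T (update P k (i, b, a)) = T (update P k (i, a, b)) := by
  simpa using hp (update P k (i, a, b)) k

theorem PairSymmetric.exists_apply_eq_apply_update_snd (hp : PairSymmetric T)
    {P : ι → κ × δ × δ} {k : ι} {x : δ} (hx : (P k).2.1 = x ∨ (P k).2.2 = x) :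
    ∃ b, T P = T (update P k ((P k).1, b, x)) := by
  rcases hx with hx | hx
  · exact ⟨(P k).2.2, by rw [← hx]; exact (hp P k).symm⟩
  · exact ⟨(P k).2.1, by rw [← hx]; exact congrArg T (update_eq_self k P).symm⟩

theorem SlotSymmetric.apply_update_update_comm (hs : SlotSymmetric T) {k l : ι} (hkl : k ≠ l)
    (P : ι → κ × δ × δ) (p q : κ × δ × δ) :
    T (update (update P k p) l q) = T (update (update P k q) l p) := by
  rw [← hs _ (Equiv.swap k l)]
  congr 1
  funext m
  rcases eq_or_ne m k with rfl | hmk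
  · simp [hkl]
  rcases eq_or_ne m l with rfl | hml
  · simp [hkl]
  · simp [Equiv.swap_apply_of_ne_of_ne hmk hml, hmk, hml]

variable [AddCommGroup M]

def CyclicIdentity (T : (ι → κ × δ × δ) → M) : Prop :=
  ∀ (P : ι → κ × δ × δ) (k l : ι), k ≠ l → ∀ (i j : κ) (a b c d : δ),
    T (update (update P k (i, a, b)) l (j, c, d)) +
    T (update (update P k (i, a, c)) l (j, d, b)) +
    T (update (update P k (i, a, d)) l (j, b, c)) = 0

variable [IsAddTorsionFree M]

theorem CyclicIdentity.apply_update_update_diag_eq_zero (hc : CyclicIdentity T)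
    (hp : PairSymmetric T) (hs : SlotSymmetric T) {k l : ι} (hkl : k ≠ l)
    (P : ι → κ × δ × δ) (i j : κ) (x d : δ) :
    T (update (update P k (i, x, x)) l (j, d, x)) = 0 := by
  let f i j := T (update (update P k (i, x, x)) l (j, d, x))
  have key : ∀ i j, f i j + f j i + f i j = 0 := by
    intro i j
    have H := hc P k l hkl i j x x d x
    rwa [hs.apply_update_update_comm hkl P (i, x, d) (j, x, x), ← hp.apply_update_swap _ l i x d,
      hp.apply_update_swap _ l j d x] at H
  have h3 : 3 • f i j = 0 := by
    rw [show 3 • f i j = 2 • (f i j + f j i + f i j) - (f j i + f i j + f j i) by abel,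
      key, key, smul_zero, sub_zero]
  exact (nsmul_eq_zero_iff_right three_ne_zero).mp h3

theorem CyclicIdentity.apply_eq_zero_of_diag (hc : CyclicIdentity T) (hp : PairSymmetric T)
    (hs : SlotSymmetric T) {P : ι → κ × δ × δ} {k l : ι} (hkl : k ≠ l) {x : δ}
    (hk : (P k).2 = (x, x)) (hl : (P l).2.1 = x ∨ (P l).2.2 = x) : T P = 0 := by
  obtain ⟨d, hd⟩ := hp.exists_apply_eq_apply_update_snd hl
  have hPk : update P k ((P k).1, x, x) = P := by rw [← hk]; exact update_eq_self k P
  have := hc.apply_update_update_diag_eq_zero hp hs hkl P (P k).1 (P l).1 x d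
  rwa [hPk, ← hd] at this

theorem CyclicIdentity.apply_update_update_eq_zero_of_mem (hc : CyclicIdentity T)
    (hp : PairSymmetric T) (hs : SlotSymmetric T) {k l m : ι} (hkl : k ≠ l) (hkm : k ≠ m)
    (hlm : l ≠ m) (P : ι → κ × δ × δ) {x : δ} (hm : (P m).2.1 = x ∨ (P m).2.2 = x)
    (i j : κ) (b c : δ) : T (update (update P k (i, b, x)) l (j, c, x)) = 0 := by
  have H := hc P k l hkl i j b x c x
  have hdiag : T (update (update P k (i, b, c)) l (j, x, x)) = 0 :=
    hc.apply_eq_zero_of_diag hp hs hlm (x := x) (by simp)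
      (by rwa [update_of_ne hlm.symm, update_of_ne hkm.symm])
  rwa [hdiag, add_zero, hp.apply_update_swap _ l j c x, ← two_nsmul, two_nsmul_eq_zero] at H

theorem CyclicIdentity.apply_eq_zero_of_mem_of_mem_of_mem (hc : CyclicIdentity T)
    (hp : PairSymmetric T) (hs : SlotSymmetric T) {P : ι → κ × δ × δ} {k l m : ι}
    (hkl : k ≠ l) (hkm : k ≠ m) (hlm : l ≠ m) {x : δ} (hk : (P k).2.1 = x ∨ (P k).2.2 = x)
    (hl : (P l).2.1 = x ∨ (P l).2.2 = x) (hm : (P m).2.1 = x ∨ (P m).2.2 = x) : T P = 0 := by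
  obtain ⟨b, hb⟩ := hp.exists_apply_eq_apply_update_snd hk
  obtain ⟨c, hc'⟩ := hp.exists_apply_eq_apply_update_snd (P := update P k ((P k).1, b, x))
    (k := l) (by rwa [update_of_ne hkl.symm])
  rw [hb, hc', update_of_ne hkl.symm]
  exact hc.apply_update_update_eq_zero_of_mem hp hs hkl hkm hlm P hm _ _ b c

end Symmetries

section Counting

variable {ι δ : Type*} [DecidableEq δ]

def pairCount (x : δ) (p : δ × δ) : ℕ :=
  (if p.1 = x then 1 else 0) + (if p.2 = x then 1 else 0)

variable {x : δ} {p : δ × δ}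

theorem pairCount_le_two : pairCount x p ≤ 2 := by
  unfold pairCount; split_ifs <;> simp

theorem pairCount_eq_two_iff : pairCount x p = 2 ↔ p = (x, x) := by
  unfold pairCount; split_ifs <;> simp [Prod.ext_iff, *]

theorem pairCount_ne_zero_iff : pairCount x p ≠ 0 ↔ p.1 = x ∨ p.2 = x := by
  unfold pairCount; split_ifs <;> simp [*]

theorem sum_pairCount [Fintype δ] (p : δ × δ) : ∑ x, pairCount x p = 2 := by
  simp [pairCount, sum_add_distrib]

theorem exists_two_lt_sum_pairCount [Fintype ι] [Fintype δ] (P : ι → δ × δ)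
    (h : Fintype.card δ < Fintype.card ι) : ∃ x, 2 < ∑ k, pairCount x (P k) := by
  have : ∑ _x : δ, 2 < ∑ x, ∑ k, pairCount x (P k) := by
    rw [sum_comm]
    simp only [sum_pairCount, sum_const, card_univ, smul_eq_mul]
    omega
  simpa using exists_lt_of_sum_lt this

theorem exists_eq_two_and_ne_zero_or_three_ne_zero [Fintype ι] {f : ι → ℕ}
    (hf : ∀ k, f k ≤ 2) (h : 2 < ∑ k, f k) :
    (∃ k l, k ≠ l ∧ f k = 2 ∧ f l ≠ 0) ∨
      ∃ k l m, k ≠ l ∧ k ≠ m ∧ l ≠ m ∧ f k ≠ 0 ∧ f l ≠ 0 ∧ f m ≠ 0 := by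
  classical
  by_cases h2 : ∃ k, f k = 2
  · obtain ⟨k, hk⟩ := h2
    have hrest : ∑ l ∈ univ.erase k, f l ≠ 0 := by
      have := add_sum_erase univ f (mem_univ k)
      omega
    obtain ⟨l, hl, hfl⟩ := exists_ne_zero_of_sum_ne_zero hrest
    exact Or.inl ⟨k, l, (ne_of_mem_erase hl).symm, hk, hfl⟩
  · push Not at h2
    have hcard : 2 < #{k | f k ≠ 0} := by
      calc 2 < ∑ k, f k := h
        _ ≤ ∑ k, if f k ≠ 0 then 1 else 0 := sum_le_sum fun k _ => by
          have := hf k; have := h2 k; split_ifs <;> omega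
        _ = #{k | f k ≠ 0} := by rw [sum_boole, Nat.cast_id]
    obtain ⟨k, hk, l, hl, m, hm, hkl, hkm, hlm⟩ := two_lt_card.mp hcard
    simp only [mem_filter, mem_univ, true_and] at hk hl hm
    exact Or.inr ⟨k, l, m, hkl, hkm, hlm, hk, hl, hm⟩

end Counting

theorem CyclicIdentity.eq_zero {ι κ δ M : Type*} [DecidableEq ι] [Fintype ι] [Fintype δ]
    [AddCommGroup M] [IsAddTorsionFree M] {T : (ι → κ × δ × δ) → M} (hc : CyclicIdentity T)
    (hp : PairSymmetric T) (hs : SlotSymmetric T) (h : Fintype.card δ < Fintype.card ι)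
    (P : ι → κ × δ × δ) : T P = 0 := by
  classical
  obtain ⟨x, hx⟩ := exists_two_lt_sum_pairCount (fun k => (P k).2) h
  rcases exists_eq_two_and_ne_zero_or_three_ne_zero (fun k => pairCount_le_two) hx with
    ⟨k, l, hkl, hk, hl⟩ | ⟨k, l, m, hkl, hkm, hlm, hk, hl, hm⟩
  · exact hc.apply_eq_zero_of_diag hp hs hkl (pairCount_eq_two_iff.mp hk)
      (pairCount_ne_zero_iff.mp hl)
  · rw [pairCount_ne_zero_iff] at hk hl hm
    exact hc.apply_eq_zero_of_mem_of_mem_of_mem hp hs hkl hkm hlm hk hl hm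

theorem stmt_8_general (D N n : ℕ) (hn : D + 1 ≤ n)
    (T : (Fin n → Fin N × (Fin D × Fin D)) → ℝ)
    (hwp : ∀ (P : Fin n → Fin N × (Fin D × Fin D)) (k : Fin n),
      T (Function.update P k ((P k).1, ((P k).2.2, (P k).2.1))) = T P)
    (hse : ∀ (P : Fin n → Fin N × (Fin D × Fin D)) (σ : Equiv.Perm (Fin n)),
      T (P ∘ σ) = T P)
    (hcyc : ∀ (P : Fin n → Fin N × (Fin D × Fin D)) (k l : Fin n), k ≠ l →
      ∀ (i j : Fin N) (a b c d : Fin D),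
        T (Function.update (Function.update P k (i, (a, b))) l (j, (c, d))) +
        T (Function.update (Function.update P k (i, (a, c))) l (j, (d, b))) +
        T (Function.update (Function.update P k (i, (a, d))) l (j, (b, c))) = 0) :
    ∀ P : Fin n → Fin N × (Fin D × Fin D), T P = 0 :=
  CyclicIdentity.eq_zero (T := T) hcyc hwp hse (by simpa using hn)

theorem stmt_8 (D N n : ℕ) (hD : 1 ≤ D) (hN : 1 ≤ N) (hn : D + 1 ≤ n)
    (T : (Fin n → Fin N × (Fin D × Fin D)) → ℝ)
    (hwp : ∀ (P : Fin n → Fin N × (Fin D × Fin D)) (k : Fin n),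
      T (Function.update P k ((P k).1, ((P k).2.2, (P k).2.1))) = T P)
    (hse : ∀ (P : Fin n → Fin N × (Fin D × Fin D)) (σ : Equiv.Perm (Fin n)),
      T (P ∘ σ) = T P)
    (hcyc : ∀ (P : Fin n → Fin N × (Fin D × Fin D)) (k l : Fin n), k ≠ l →
      ∀ (i j : Fin N) (a b c d : Fin D),
        T (Function.update (Function.update P k (i, (a, b))) l (j, (c, d))) +
        T (Function.update (Function.update P k (i, (a, c))) l (j, (d, b))) +
        T (Function.update (Function.update P k (i, (a, d))) l (j, (b, c))) = 0) :
    ∀ P : Fin n → Fin N × (Fin D × Fin D), T P = 0 :=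
  stmt_8_general D N n hn T hwp hse hcyc
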